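/- Let G be a finite simple graph of minimum degree at least 1, and let S(G) be the graph with vertex set V(G) ∪ E(G) in which any two distinct vertices of V(G) are adjacent (they form a clique), no two vertices of E(G) are adjacent, and each vertex e = uv ∈ E(G) is adjacent exactly to u and v. Then for every positive integer q, G admits a proper (3q:q)-colouring if and only if S(G) admits a dominating (3q:q)-colouring. (Consequently, the fractional chromatic number of G is at most 3 if and only if fdom(S(G)) ≥ 3.) -/

import Mathlib

open Finset
open scoped Classical

/-- A dominating `(p:q)`-colouring of `G`: each vertex gets a `q`-element subset of the `p`
colours, and every closed neighbourhood sees all `p` colours. -/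
def IsDomPQColouring {V : Type*} (G : SimpleGraph V) (p q : ℕ) (φ : V → Finset (Fin p)) :
    Prop :=
  (∀ v, (φ v).card = q) ∧ ∀ v : V, ∀ c : Fin p, ∃ u : V, (u = v ∨ G.Adj u v) ∧ c ∈ φ u

/-- A proper `(p:q)`-colouring of `G`: each vertex gets a `q`-element subset of the `p`
colours, and adjacent vertices get disjoint sets. -/
def IsProperPQColouring {V : Type*} (G : SimpleGraph V) (p q : ℕ) (φ : V → Finset (Fin p)) :
    Prop :=
  (∀ v, (φ v).card = q) ∧ ∀ ⦃a b : V⦄, G.Adj a b → Disjoint (φ a) (φ b)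

/-- The graph `S(G)` on `V(G) ∪ E(G)`: the vertices of `G` form a clique, the edges of `G`
form an independent set, and each edge `e = uv` of `G` is adjacent exactly to `u` and `v`. -/
def SG {V : Type*} (G : SimpleGraph V) : SimpleGraph (V ⊕ ↥G.edgeSet) :=
  SimpleGraph.fromRel (fun x y =>
    match x, y with
    | .inl _, .inl _ => True
    | .inl u, .inr e => u ∈ (e : Sym2 V)
    | _, _ => False)


lemma sym2_out (α : Type*) (s : Sym2 α) : s(s.out.1, s.out.2) = s := by
  show Sym2.mk _ _ = s
  rw [Sym2.mk, s.out_eq]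

lemma SG_adj_inl_inl {V : Type*} (G : SimpleGraph V) (u v : V) :
    (SG G).Adj (.inl u) (.inl v) ↔ u ≠ v := by
  simp [SG, SimpleGraph.fromRel_adj]

lemma SG_adj_inl_inr {V : Type*} (G : SimpleGraph V) (u : V) (e : ↥G.edgeSet) :
    (SG G).Adj (.inl u) (.inr e) ↔ u ∈ (e : Sym2 V) := by
  simp [SG, SimpleGraph.fromRel_adj]

lemma SG_not_adj_inr_inr {V : Type*} (G : SimpleGraph V) (e f : ↥G.edgeSet) :
    ¬ (SG G).Adj (.inr e) (.inr f) := by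
  simp [SG, SimpleGraph.fromRel_adj]

/-- For a graph `G` of minimum degree at least 1 and any positive integer `q`,
`G` has a proper `(3q:q)`-colouring if and only if `S(G)` has a dominating
`(3q:q)`-colouring. -/
theorem properPQ_iff_domPQ_SG {V : Type*} [Fintype V] [DecidableEq V] (G : SimpleGraph V)
    (hdeg : ∀ v : V, 1 ≤ G.degree v) (q : ℕ) (hq : 0 < q) :
    (∃ φ : V → Finset (Fin (3 * q)), IsProperPQColouring G (3 * q) q φ) ↔
      (∃ ψ : (V ⊕ ↥G.edgeSet) → Finset (Fin (3 * q)),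
        IsDomPQColouring (SG G) (3 * q) q ψ) := by
  constructor
  · rintro ⟨φ, hcard, hdisj⟩
    have hadjout : ∀ e : ↥G.edgeSet, G.Adj (e : Sym2 V).out.1 (e : Sym2 V).out.2 := by
      intro e
      have h2 := e.2
      rw [← sym2_out V (e : Sym2 V)] at h2
      exact h2
    refine ⟨fun x => match x with
      | .inl v => φ v
      | .inr e => (φ (e : Sym2 V).out.1 ∪ φ (e : Sym2 V).out.2)ᶜ, ?_, ?_⟩
    · rintro (v | e)
      · exact hcard v
      · have hd := hdisj (hadjout e)
        rw [Finset.card_compl, Finset.card_union_of_disjoint hd, hcard, hcard,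
          Fintype.card_fin]
        omega
    · rintro (v | e) c
      · by_cases hv : c ∈ φ v
        · exact ⟨.inl v, Or.inl rfl, hv⟩
        · obtain ⟨w, hvw⟩ := G.degree_pos_iff_exists_adj v |>.1 (hdeg v)
          by_cases hw : c ∈ φ w
          · exact ⟨.inl w, Or.inr ((SG_adj_inl_inl G w v).2 hvw.ne'), hw⟩
          · refine ⟨.inr ⟨s(v, w), hvw⟩, Or.inr ?_, ?_⟩
            · exact ((SG_adj_inl_inr G v ⟨s(v, w), hvw⟩).2 (Sym2.mem_mk_left v w)).symm
            · simp only [Finset.mem_compl, Finset.mem_union, not_or]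
              constructor
              · have := Sym2.out_fst_mem (s(v, w))
                rw [Sym2.mem_iff] at this
                rcases this with h | h <;> rw [h] <;> assumption
              · have := Sym2.out_snd_mem (s(v, w))
                rw [Sym2.mem_iff] at this
                rcases this with h | h <;> rw [h] <;> assumption
      · by_cases hc : c ∈ φ (e : Sym2 V).out.1 ∪ φ (e : Sym2 V).out.2
        · rw [Finset.mem_union] at hc
          rcases hc with h | h
          · exact ⟨.inl (e : Sym2 V).out.1,
              Or.inr ((SG_adj_inl_inr G _ e).2 (Sym2.out_fst_mem _)), h⟩
          · exact ⟨.inl (e : Sym2 V).out.2,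
              Or.inr ((SG_adj_inl_inr G _ e).2 (Sym2.out_snd_mem _)), h⟩
        · exact ⟨.inr e, Or.inl rfl, Finset.mem_compl.2 hc⟩
  · rintro ⟨ψ, hcard, hdom⟩
    refine ⟨fun v => ψ (.inl v), fun v => hcard _, ?_⟩
    intro a b hab
    set e : ↥G.edgeSet := ⟨s(a, b), hab⟩ with he
    have hcover : (univ : Finset (Fin (3 * q))) ⊆
        ψ (.inr e) ∪ (ψ (.inl a) ∪ ψ (.inl b)) := by
      intro c _
      obtain ⟨u, hu, hcu⟩ := hdom (.inr e) c
      rcases hu with rfl | hadj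
      · simp [hcu]
      · match u with
        | .inl w =>
          have hw : w ∈ (e : Sym2 V) := (SG_adj_inl_inr G w e).1 hadj
          rw [he] at hw
          rw [Sym2.mem_iff] at hw
          rcases hw with rfl | rfl <;> simp [hcu]
        | .inr f => exact absurd hadj (SG_not_adj_inr_inr G f e)
    by_contra hnd
    obtain ⟨x, hxB, hxC⟩ := Finset.not_disjoint_iff.1 hnd
    have h1 : (ψ (.inl a) ∪ ψ (.inl b)).card + 1 ≤ 2 * q := by
      have := Finset.card_union_add_card_inter (ψ (.inl a)) (ψ (.inl b))
      have hne : 1 ≤ (ψ (.inl a) ∩ ψ (.inl b)).card :=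
        Finset.card_pos.2 ⟨x, Finset.mem_inter.2 ⟨hxB, hxC⟩⟩
      rw [hcard, hcard] at this
      omega
    have h2 : (univ : Finset (Fin (3 * q))).card ≤
        (ψ (.inr e)).card + (ψ (.inl a) ∪ ψ (.inl b)).card :=
      le_trans (Finset.card_le_card hcover) (Finset.card_union_le _ _)
    rw [Finset.card_univ, Fintype.card_fin, hcard] at h2
    omega
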